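/- arXiv:math/0601652 — 3 statements merged into one kernel-verified Lean document; each statement's English description precedes it below -/
import Mathlib

section
/- Let p ∈ (0,1) with p ≠ 1/2 and q = 1 - p. Let X be a Bernoulli(p) random variable (P(X=1)=p, P(X=0)=q) and let Y be a random variable independent of X with finite variance such that X + Y is symmetric around zero (i.e., X+Y and -(X+Y) have the same distribution). Then Var(Y) ≥ p·q. -/
/-!
The test function `w y = (-1) ^ ⌊y⌋ * {y} * (1 - {y})` is odd, `1`-antiperiodic, bounded and
satisfies `w y ≤ y ^ 2 + y`. Symmetry of `X + Y` gives `E[X + Y] = 0`, so `E[Y] = -p`, and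
`E[w (X + Y)] = 0`. As `X ∈ {0, 1}`, antiperiodicity gives `w (X + Y) = (1 - 2X) w Y`, so by
independence `(1 - 2p) E[w Y] = 0`, whence `E[w Y] = 0` because `p ≠ 1/2`. Therefore
`0 ≤ E[Y²] + E[Y] = E[Y²] - p`, i.e. `Var Y = E[Y²] - p² ≥ p - p²`.
-/

open MeasureTheory ProbabilityTheory

noncomputable def alternatingArch (y : ℝ) : ℝ :=
  (-1 : ℝ) ^ ⌊y⌋ * (Int.fract y * (1 - Int.fract y))

lemma measurable_alternatingArch : Measurable alternatingArch :=
  ((measurable_from_top (f := fun n : ℤ => (-1 : ℝ) ^ n)).comp Int.measurable_floor).mul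
    (measurable_fract.mul (measurable_const.sub measurable_fract))

lemma abs_alternatingArch (y : ℝ) :
    |alternatingArch y| = Int.fract y * (1 - Int.fract y) := by
  rw [alternatingArch, abs_mul, abs_neg_one_zpow, one_mul, abs_of_nonneg]
  exact mul_nonneg (Int.fract_nonneg y) (sub_nonneg.2 (Int.fract_lt_one y).le)

lemma abs_alternatingArch_le_one (y : ℝ) : |alternatingArch y| ≤ 1 := by
  rw [abs_alternatingArch]
  nlinarith [Int.fract_nonneg y, Int.fract_lt_one y]

lemma alternatingArch_antiperiodic : Function.Antiperiodic alternatingArch 1 := fun y => by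
  rw [alternatingArch, alternatingArch, Int.floor_add_one, Int.fract_add_one,
    zpow_add_one₀ (by norm_num)]
  ring

lemma alternatingArch_odd : Function.Odd alternatingArch := fun y => by
  by_cases hy : Int.fract y = 0
  · simp [alternatingArch, hy, Int.fract_neg_eq_zero.2 hy]
  have hfloor : ⌊-y⌋ = -⌊y⌋ - 1 := by
    have h := Int.floor_add_fract (-y)
    rw [Int.fract_neg hy] at h
    have := Int.floor_add_fract y
    exact_mod_cast (by linarith : (⌊-y⌋ : ℝ) = -⌊y⌋ - 1)
  rw [alternatingArch, alternatingArch, hfloor, Int.fract_neg hy, zpow_sub₀ (by norm_num),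
    zpow_neg, zpow_one]
  rcases Int.even_or_odd ⌊y⌋ with h | h <;> simp [h.neg_one_zpow] <;> ring

lemma fract_mul_one_sub_fract_le {y : ℝ} (hy : ⌊y⌋ ≠ -1) :
    Int.fract y * (1 - Int.fract y) ≤ y ^ 2 + y := by
  have hu0 := Int.fract_nonneg y
  have hu1 := (Int.fract_lt_one y).le
  have hsplit := Int.floor_add_fract y
  set u := Int.fract y
  set n := ⌊y⌋
  have hgap : y ^ 2 + y - u * (1 - u) = n * (n + 1 + 2 * u) + 2 * u ^ 2 := by
    rw [← hsplit]; ring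
  rcases le_or_gt 0 n with hn | hn
  · have : (0 : ℝ) ≤ n := by exact_mod_cast hn
    nlinarith
  · have : (n : ℝ) ≤ -2 := by exact_mod_cast (by omega : n ≤ -2)
    -- the gap equals `(-n - 2) * (1 - n - 2u) + 2 (1 - u) ^ 2`
    nlinarith [mul_nonneg (by linarith : (0 : ℝ) ≤ -n - 2)
      (by linarith : (0 : ℝ) ≤ 1 - n - 2 * u)]

lemma alternatingArch_le (y : ℝ) : alternatingArch y ≤ y ^ 2 + y := by
  by_cases hy : ⌊y⌋ = -1
  · have hsplit := Int.floor_add_fract y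
    rw [alternatingArch, hy]
    rw [hy] at hsplit
    set u := Int.fract y
    have : y ^ 2 + y = -(u * (1 - u)) := by rw [← hsplit]; push_cast; ring
    simp [this]
  · exact (le_abs_self _).trans ((abs_alternatingArch y).trans_le (fract_mul_one_sub_fract_le hy))

section

variable {Ω : Type*} [MeasurableSpace Ω] {μ : Measure Ω}

lemma integral_comp_eq_zero_of_map_eq_map_neg {Z : Ω → ℝ} (hZ : AEMeasurable Z μ)
    (hsymm : μ.map Z = μ.map (fun ω => -Z ω)) {f : ℝ → ℝ} (hf : Measurable f)
    (hodd : Function.Odd f) : ∫ ω, f (Z ω) ∂μ = 0 := by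
  have hflip : ∫ ω, f (Z ω) ∂μ = ∫ ω, f (-Z ω) ∂μ := by
    rw [← integral_map hZ hf.aestronglyMeasurable, hsymm]
    exact integral_map hZ.neg hf.aestronglyMeasurable
  simp only [hodd _, integral_neg] at hflip
  linarith

lemma ae_eq_one_or_eq_zero {X : Ω → ℝ} (hX : Measurable X) [IsProbabilityMeasure μ]
    (h : μ {ω | X ω = 1} + μ {ω | X ω = 0} = 1) : ∀ᵐ ω ∂μ, X ω = 1 ∨ X ω = 0 := by
  have hA : MeasurableSet {ω | X ω = 1} := hX (measurableSet_singleton 1)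
  have hB : MeasurableSet {ω | X ω = 0} := hX (measurableSet_singleton 0)
  have hdisj : Disjoint {ω | X ω = 1} {ω | X ω = 0} :=
    Set.disjoint_left.2 fun ω h1 h0 => one_ne_zero (h1.symm.trans h0)
  rw [ae_iff, ← Set.compl_ofPred]
  refine (prob_compl_eq_zero_iff (hA.union hB)).2 ?_
  exact (measure_union hdisj hB).trans h

lemma integrable_of_ae_eq_one_or_eq_zero [IsFiniteMeasure μ] {X : Ω → ℝ}
    (hX01 : ∀ᵐ ω ∂μ, X ω = 1 ∨ X ω = 0) (hX : AEStronglyMeasurable X μ) :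
    Integrable X μ :=
  .of_bound hX 1 (hX01.mono fun ω h => by rcases h with h | h <;> simp [h])

lemma integral_eq_measureReal_of_ae_eq_one_or_eq_zero {X : Ω → ℝ}
    (hX01 : ∀ᵐ ω ∂μ, X ω = 1 ∨ X ω = 0) (hX : Measurable X) :
    ∫ ω, X ω ∂μ = μ.real {ω | X ω = 1} := by
  have hind : X =ᵐ[μ] {ω | X ω = 1}.indicator 1 := hX01.mono fun ω h => by
    rcases h with h | h <;> simp [h]
  have hA : MeasurableSet {ω | X ω = 1} := hX (measurableSet_singleton 1)
  rw [integral_congr_ae hind, integral_indicator_one hA]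

lemma integral_comp_eq_zero_of_map_add_eq_map_neg [IsProbabilityMeasure μ] {X Y : Ω → ℝ}
    (hX : AEMeasurable X μ) (hY : AEMeasurable Y μ) (hXY : IndepFun X Y μ)
    (hX01 : ∀ᵐ ω ∂μ, X ω = 1 ∨ X ω = 0) (hEX : ∫ ω, X ω ∂μ ≠ 1 / 2)
    (hsymm : μ.map (fun ω => X ω + Y ω) = μ.map (fun ω => -(X ω + Y ω)))
    {f : ℝ → ℝ} (hf : Measurable f) (hodd : Function.Odd f)
    (hanti : Function.Antiperiodic f 1) :
    ∫ ω, f (Y ω) ∂μ = 0 := by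
  have hsum : ∫ ω, f (X ω + Y ω) ∂μ = 0 :=
    integral_comp_eq_zero_of_map_eq_map_neg (hX.add hY) hsymm hf hodd
  have hsign : (fun ω => f (X ω + Y ω)) =ᵐ[μ] fun ω => (1 - 2 * X ω) * f (Y ω) :=
    hX01.mono fun ω h => by
      dsimp only
      rcases h with h | h
      · rw [h, add_comm, hanti]; ring
      · rw [h, zero_add]; ring
  have hind : IndepFun (fun ω => 1 - 2 * X ω) (fun ω => f (Y ω)) μ :=
    hXY.comp (by fun_prop : Measurable fun x : ℝ => 1 - 2 * x) hf
  have hXint : Integrable X μ := integrable_of_ae_eq_one_or_eq_zero hX01 hX.aestronglyMeasurable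
  have hmean : ∫ ω, 1 - 2 * X ω ∂μ = 1 - 2 * ∫ ω, X ω ∂μ := by
    rw [integral_sub (integrable_const 1) (hXint.const_mul 2), integral_const_mul]
    simp
  have hprod := hind.integral_mul_eq_mul_integral (by fun_prop)
    (hf.comp_aemeasurable hY).aestronglyMeasurable
  simp only [Pi.mul_def] at hprod
  rw [integral_congr_ae hsign, hprod, hmean] at hsum
  exact (mul_eq_zero.1 hsum).resolve_left fun h => hEX (by linarith)

lemma neg_integral_le_integral_sq [IsFiniteMeasure μ] {Y : Ω → ℝ} (hY : MemLp Y 2 μ)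
    (hw : ∫ ω, alternatingArch (Y ω) ∂μ = 0) :
    -∫ ω, Y ω ∂μ ≤ ∫ ω, Y ω ^ 2 ∂μ := by
  have hYint : Integrable Y μ := hY.integrable one_le_two
  have hY2int : Integrable (fun ω => Y ω ^ 2) μ := hY.integrable_sq
  have hwint : Integrable (fun ω => alternatingArch (Y ω)) μ :=
    .of_bound (measurable_alternatingArch.comp_aemeasurable hY.aemeasurable).aestronglyMeasurable
      1 (ae_of_all _ fun ω => abs_alternatingArch_le_one (Y ω))
  have hmono : ∫ ω, alternatingArch (Y ω) ∂μ ≤ ∫ ω, Y ω ^ 2 + Y ω ∂μ :=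
    integral_mono hwint (hY2int.add hYint) fun ω => alternatingArch_le (Y ω)
  rw [hw, integral_add hY2int hYint] at hmono
  linarith

end

/-- **Symmetry resistance of Bernoulli(p), quantitative form.**
If `X` is Bernoulli(`p`) with `p ∈ (0,1)`, `p ≠ 1/2`, and `Y` is independent of `X` with
finite variance such that `X + Y` is symmetric around zero, then `Var(Y) ≥ p·(1-p)`. -/
theorem bernoulli_symmetrizer_variance_ge
    {Ω : Type*} [MeasurableSpace Ω] (μ : Measure Ω) [IsProbabilityMeasure μ]
    (p : ℝ) (hp : p ∈ Set.Ioo (0 : ℝ) 1) (hp_ne : p ≠ 1 / 2)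
    (X Y : Ω → ℝ) (hX : Measurable X) (hY : Measurable Y)
    (hX1 : μ {ω | X ω = 1} = ENNReal.ofReal p)
    (hX0 : μ {ω | X ω = 0} = ENNReal.ofReal (1 - p))
    (hindep : IndepFun X Y μ)
    (hY_L2 : MemLp Y 2 μ)
    (hsymm : μ.map (fun ω => X ω + Y ω) = μ.map (fun ω => -(X ω + Y ω))) :
    variance Y μ ≥ p * (1 - p) := by
  obtain ⟨hp0, hp1⟩ := hp
  have hX01 : ∀ᵐ ω ∂μ, X ω = 1 ∨ X ω = 0 := ae_eq_one_or_eq_zero hX (by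
    rw [hX1, hX0, ← ENNReal.ofReal_add hp0.le (by linarith)]
    simp)
  have hEX : ∫ ω, X ω ∂μ = p := by
    rw [integral_eq_measureReal_of_ae_eq_one_or_eq_zero hX01 hX, measureReal_def, hX1,
      ENNReal.toReal_ofReal hp0.le]
  have hEY : ∫ ω, Y ω ∂μ = -p := by
    have hEZ : ∫ ω, X ω + Y ω ∂μ = 0 :=
      integral_comp_eq_zero_of_map_eq_map_neg (hX.add hY).aemeasurable hsymm measurable_id
        fun _ => rfl
    rw [integral_add (integrable_of_ae_eq_one_or_eq_zero hX01 hX.aestronglyMeasurable)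
      (hY_L2.integrable one_le_two), hEX] at hEZ
    linarith
  have hEW : ∫ ω, alternatingArch (Y ω) ∂μ = 0 :=
    integral_comp_eq_zero_of_map_add_eq_map_neg hX.aemeasurable hY.aemeasurable hindep hX01
      (hEX ▸ hp_ne) hsymm measurable_alternatingArch alternatingArch_odd
      alternatingArch_antiperiodic
  have hsecond := neg_integral_le_integral_sq hY_L2 hEW
  rw [variance_eq_sub hY_L2]
  simp only [Pi.pow_apply, hEY] at hsecond ⊢
  nlinarith
end

section
/- Let p ∈ (0,1) and q = 1-p. Let X be a Bernoulli(p) random variable and let Y be independent of X with P(Y = -1) = p and P(Y = 0) = q. Then X + Y is symmetric around zero; i.e., Y is a symmetrizer for X, and Var(Y) = pq = Var(X). Hence the lower bound pq on the variance of a symmetrizer of Bernoulli(p) is attained. -/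
/-!
Since `P(Y = -1) = p` and `P(Y = 0) = q`, the variable `-Y` has the law of `X`, and then `-X` has
the law of `Y`. By independence the pairs `(X, Y)` and `(-Y, -X)` both have the product law
`law X ⊗ law Y`, so their sums `X + Y` and `-Y - X = -(X + Y)` have the same law. The variances
are those of Bernoulli laws on two points at distance one, namely `pq`.
-/

open MeasureTheory ProbabilityTheory

open unitInterval

theorem ProbabilityTheory.IndepFun.map_add_eq_map_neg_of_map_eq_map_neg
    {Ω E : Type*} [MeasurableSpace Ω] {μ : Measure Ω} [IsFiniteMeasure μ]
    [AddCommGroup E] [MeasurableSpace E] [MeasurableNeg E] [MeasurableAdd₂ E]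
    {X Y : Ω → E} (hX : AEMeasurable X μ) (hY : AEMeasurable Y μ) (hXY : IndepFun X Y μ)
    (hlaw : μ.map X = μ.map (fun ω => -Y ω)) :
    μ.map (fun ω => X ω + Y ω) = μ.map (fun ω => -(X ω + Y ω)) := by
  have hnX : AEMeasurable (fun ω => -X ω) μ := hX.neg
  have hnY : AEMeasurable (fun ω => -Y ω) μ := hY.neg
  have hlaw' : μ.map (fun ω => -X ω) = μ.map Y := by
    simpa [Function.comp_def] using ((IdentDistrib.mk hX hnY hlaw).comp measurable_neg).map_eq
  have hpair : IdentDistrib (fun ω => (X ω, Y ω)) (fun ω => (-Y ω, -X ω)) μ μ := by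
    refine ⟨hX.prodMk hY, hnY.prodMk hnX, ?_⟩
    rw [(indepFun_iff_map_prod_eq_prod_map_map hX hY).1 hXY,
      (indepFun_iff_map_prod_eq_prod_map_map hnY hnX).1
        (hXY.symm.comp measurable_neg measurable_neg), hlaw, hlaw']
  have hneg : (fun ω => -(X ω + Y ω)) = (fun z : E × E => z.1 + z.2) ∘ fun ω => (-Y ω, -X ω) := by
    funext ω
    exact neg_add_rev (X ω) (Y ω)
  rw [hneg]
  exact (hpair.comp measurable_add).map_eq

theorem eq_bernoulliMeasure {S : Type*} [MeasurableSpace S] [MeasurableSingletonClass S]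
    {ν : Measure S} [IsProbabilityMeasure ν] {x y : S} (hxy : x ≠ y) {p : I}
    (hx : ν {x} = toNNReal p) (hy : ν {y} = toNNReal (σ p)) :
    ν = bernoulliMeasure x y p := by
  have hdisj : Disjoint ({x} : Set S) {y} := Set.disjoint_singleton.2 hxy
  have hfull : ν ({x} ∪ {y}) = 1 := by
    rw [measure_union hdisj (measurableSet_singleton y), hx, hy, ← ENNReal.coe_add,
      toNNReal_add_toNNReal_symm, ENNReal.coe_one]
  have hae : ∀ᵐ s ∂ν, s ∈ ({x} ∪ {y} : Set S) :=
    ae_iff.2 ((prob_compl_eq_zero_iff ((measurableSet_singleton x).union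
      (measurableSet_singleton y))).2 hfull)
  rw [← Measure.restrict_eq_self_of_ae_mem hae, Measure.restrict_union hdisj
    (measurableSet_singleton y), Measure.restrict_singleton, Measure.restrict_singleton, hx, hy,
    bernoulliMeasure_def, ENNReal.smul_def, ENNReal.smul_def]

theorem map_eq_bernoulliMeasure {Ω S : Type*} [MeasurableSpace Ω] [MeasurableSpace S]
    [MeasurableSingletonClass S] {μ : Measure Ω} [IsProbabilityMeasure μ] {Z : Ω → S}
    (hZ : Measurable Z) {x y : S} (hxy : x ≠ y) {p : I}
    (hx : μ {ω | Z ω = x} = ENNReal.ofReal p) (hy : μ {ω | Z ω = y} = ENNReal.ofReal (1 - p)) :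
    μ.map Z = bernoulliMeasure x y p := by
  have := Measure.isProbabilityMeasure_map (μ := μ) hZ.aemeasurable
  refine eq_bernoulliMeasure hxy ?_ ?_
  · rw [Measure.map_apply hZ (measurableSet_singleton x)]
    exact hx.trans (ENNReal.ofReal_coe_nnreal (p := toNNReal p))
  · rw [Measure.map_apply hZ (measurableSet_singleton y)]
    rw [← coe_symm_eq] at hy
    exact hy.trans (ENNReal.ofReal_coe_nnreal (p := toNNReal (σ p)))

theorem variance_id_bernoulliMeasure (a b : ℝ) (p : I) :
    variance id (bernoulliMeasure a b p) = p * (1 - p) * (a - b) ^ 2 := by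
  rw [variance_eq_integral measurable_id.aemeasurable, integral_bernoulliMeasure,
    integral_bernoulliMeasure]
  simp only [id, smul_eq_mul]
  ring

/-- **The lower bound `pq` for symmetrizers of Bernoulli(p) is attained.**
If `X` is Bernoulli(`p`) and `Y` is independent of `X` with `P(Y = -1) = p`, `P(Y = 0) = q`
where `q = 1 - p`, then `X + Y` is symmetric around zero (so `Y` is a symmetrizer of `X`)
and `Var(Y) = pq = Var(X)`. -/
theorem bernoulli_minimal_symmetrizer
    {Ω : Type*} [MeasurableSpace Ω] (μ : Measure Ω) [IsProbabilityMeasure μ]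
    (p : ℝ) (hp : p ∈ Set.Ioo (0 : ℝ) 1)
    (X Y : Ω → ℝ) (hX : Measurable X) (hY : Measurable Y)
    (hX1 : μ {ω | X ω = 1} = ENNReal.ofReal p)
    (hX0 : μ {ω | X ω = 0} = ENNReal.ofReal (1 - p))
    (hY1 : μ {ω | Y ω = -1} = ENNReal.ofReal p)
    (hY0 : μ {ω | Y ω = 0} = ENNReal.ofReal (1 - p))
    (hindep : IndepFun X Y μ) :
    μ.map (fun ω => X ω + Y ω) = μ.map (fun ω => -(X ω + Y ω)) ∧
    variance Y μ = p * (1 - p) ∧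
    variance X μ = p * (1 - p) := by
  let pI : I := ⟨p, hp.1.le, hp.2.le⟩
  have hlawX : μ.map X = bernoulliMeasure 1 0 pI :=
    map_eq_bernoulliMeasure hX one_ne_zero hX1 hX0
  have hlawY : μ.map Y = bernoulliMeasure (-1) 0 pI :=
    map_eq_bernoulliMeasure hY (by norm_num) hY1 hY0
  have hlawNegY : μ.map (fun ω => -Y ω) = bernoulliMeasure 1 0 pI :=
    map_eq_bernoulliMeasure hY.neg one_ne_zero (by simpa [neg_eq_iff_eq_neg] using hY1)
      (by simpa using hY0)
  refine ⟨hindep.map_add_eq_map_neg_of_map_eq_map_neg hX.aemeasurable hY.aemeasurable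
    (hlawX.trans hlawNegY.symm), ?_, ?_⟩
  · rw [← variance_id_map hY.aemeasurable, hlawY, variance_id_bernoulliMeasure]
    norm_num [pI]
  · rw [← variance_id_map hX.aemeasurable, hlawX, variance_id_bernoulliMeasure]
    norm_num [pI]
end

section
/- Define ρ : ℝ → ℝ by ρ(x) = (-1)^⌊x⌋ · (x - ⌊x⌋)(1 - (x - ⌊x⌋))/2. Then ρ is continuously differentiable on ℝ with derivative ρ'(x) = (-1)^⌊x⌋ · (1/2 - (x - ⌊x⌋)) at every non-integer x (and ρ'(k) = (-1)^k/2 at integers k), and ρ' is Lipschitz continuous with Lipschitz constant 1. -/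
/-!
On each interval `[k, k + 1]` the function `ρ` is the quadratic `(-1)^k (x - k)(1 - (x - k)) / 2`;
consecutive quadratics agree at their common endpoint, and so do their derivatives. A function
glued along the integers from differentiable pieces with matching values and slopes is
differentiable, so `ρ'` is the glued function `(-1)^k (1/2 - (x - k))`. That function is continuous
with right derivative `±1` everywhere, so the mean value inequality for right derivatives makes it
`1`-Lipschitz.
-/

/-- The function `ρ(x) = (-1)^⌊x⌋ · (x - ⌊x⌋)(1 - (x - ⌊x⌋))/2` from the symmetrization
of Bernoulli argument. -/
noncomputable def rho (x : ℝ) : ℝ :=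
  (-1 : ℝ) ^ ⌊x⌋ * ((x - ⌊x⌋) * (1 - (x - ⌊x⌋))) / 2

open Set Filter Topology NNReal

theorem lipschitzWith_of_hasDerivWithinAt_Ici {f f' : ℝ → ℝ} {C : ℝ≥0} (hf : Continuous f)
    (hderiv : ∀ x, HasDerivWithinAt f (f' x) (Ici x) x) (hbound : ∀ x, |f' x| ≤ C) :
    LipschitzWith C f := by
  have hle : ∀ a b, a ≤ b → |f b - f a| ≤ C * (b - a) := fun a b hab =>
    norm_image_sub_le_of_norm_deriv_right_le_segment hf.continuousOn
      (fun x _ => hderiv x) (fun x _ => hbound x) b ⟨hab, le_rfl⟩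
  refine LipschitzWith.of_dist_le_mul fun x y => ?_
  rw [Real.dist_eq, Real.dist_eq]
  rcases le_total x y with hxy | hyx
  · rw [abs_sub_comm, abs_sub_comm x]
    simpa [abs_of_nonneg (sub_nonneg.2 hxy)] using hle x y hxy
  · simpa [abs_of_nonneg (sub_nonneg.2 hyx)] using hle y x hyx

namespace Int

theorem mem_Ioc_ceil_sub_one (x : ℝ) : x ∈ Ioc ((⌈x⌉ - 1 : ℤ) : ℝ) ((⌈x⌉ - 1 : ℤ) + 1) := by
  push_cast
  exact ⟨by linarith [ceil_lt_add_one x], by simpa using le_ceil x⟩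

variable {f : ℝ → ℝ} {g : ℤ → ℝ → ℝ}

theorem eqOn_Icc_of_eq_floor (hf : ∀ x, f x = g ⌊x⌋ x)
    (hg : ∀ k : ℤ, g k (k + 1) = g (k + 1) (k + 1)) (k : ℤ) :
    EqOn f (g k) (Icc k (k + 1)) := by
  rintro x ⟨hkx, hxk⟩
  rcases hxk.lt_or_eq with hlt | rfl
  · rw [hf, floor_eq_iff.2 ⟨hkx, hlt⟩]
  · rw [hf, hg, floor_add_one, floor_intCast]

theorem eventuallyEq_nhdsGE_of_eq_floor (hf : ∀ x, f x = g ⌊x⌋ x)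
    (hg : ∀ k : ℤ, g k (k + 1) = g (k + 1) (k + 1)) (x : ℝ) : f =ᶠ[𝓝[≥] x] g ⌊x⌋ :=
  mem_of_superset (Icc_mem_nhdsGE_of_mem ⟨floor_le x, lt_floor_add_one x⟩)
    (eqOn_Icc_of_eq_floor hf hg ⌊x⌋)

theorem eventuallyEq_nhdsLE_of_eq_floor (hf : ∀ x, f x = g ⌊x⌋ x)
    (hg : ∀ k : ℤ, g k (k + 1) = g (k + 1) (k + 1)) (x : ℝ) : f =ᶠ[𝓝[≤] x] g (⌈x⌉ - 1) :=
  mem_of_superset (Icc_mem_nhdsLE_of_mem (mem_Ioc_ceil_sub_one x))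
    (eqOn_Icc_of_eq_floor hf hg (⌈x⌉ - 1))

theorem continuous_of_eq_floor (hf : ∀ x, f x = g ⌊x⌋ x)
    (hg : ∀ k : ℤ, g k (k + 1) = g (k + 1) (k + 1)) (hcont : ∀ k, Continuous (g k)) :
    Continuous f :=
  continuous_iff_continuousAt.2 fun x => continuousAt_iff_continuous_left_right.2
    ⟨(hcont _).continuousWithinAt.congr_of_eventuallyEq_of_mem
        (eventuallyEq_nhdsLE_of_eq_floor hf hg x) self_mem_Iic,
      (hcont _).continuousWithinAt.congr_of_eventuallyEq_of_mem
        (eventuallyEq_nhdsGE_of_eq_floor hf hg x) self_mem_Ici⟩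

theorem hasDerivWithinAt_Ici_of_eq_floor (hf : ∀ x, f x = g ⌊x⌋ x)
    (hg : ∀ k : ℤ, g k (k + 1) = g (k + 1) (k + 1)) {x a : ℝ} (hderiv : HasDerivAt (g ⌊x⌋) a x) :
    HasDerivWithinAt f a (Ici x) x :=
  hderiv.hasDerivWithinAt.congr_of_eventuallyEq_of_mem
    (eventuallyEq_nhdsGE_of_eq_floor hf hg x) self_mem_Ici

theorem hasDerivAt_of_eq_floor (hf : ∀ x, f x = g ⌊x⌋ x)
    (hg : ∀ k : ℤ, g k (k + 1) = g (k + 1) (k + 1)) {g' : ℤ → ℝ → ℝ}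
    (hderiv : ∀ k x, HasDerivAt (g k) (g' k x) x)
    (hg' : ∀ k : ℤ, g' k (k + 1) = g' (k + 1) (k + 1)) (x : ℝ) :
    HasDerivAt f (g' ⌊x⌋ x) x := by
  have hright : HasDerivWithinAt f (g' ⌊x⌋ x) (Ici x) x :=
    hasDerivWithinAt_Ici_of_eq_floor hf hg (hderiv _ x)
  -- `⌈x⌉ - 1 = ⌊x⌋` unless `x` is an integer, where the two one-sided slopes are matched by `hg'`
  have hslopes : g' ⌊x⌋ x = g' (⌈x⌉ - 1) x :=
    eqOn_Icc_of_eq_floor (fun _ => rfl) hg' _ (Ioc_subset_Icc_self (mem_Ioc_ceil_sub_one x))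
  have hleft : HasDerivWithinAt f (g' ⌊x⌋ x) (Iic x) x :=
    hslopes ▸ (hderiv _ x).hasDerivWithinAt.congr_of_eventuallyEq_of_mem
      (eventuallyEq_nhdsLE_of_eq_floor hf hg x) self_mem_Iic
  simpa [Iic_union_Ici] using hleft.union hright

end Int

noncomputable def rhoPiece (k : ℤ) (x : ℝ) : ℝ := (-1 : ℝ) ^ k * ((x - k) * (1 - (x - k))) / 2

noncomputable def rhoPieceDeriv (k : ℤ) (x : ℝ) : ℝ := (-1 : ℝ) ^ k * (1 / 2 - (x - k))

noncomputable def rhoDeriv (x : ℝ) : ℝ := rhoPieceDeriv ⌊x⌋ x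

theorem rhoPiece_succ (k : ℤ) : rhoPiece k (k + 1) = rhoPiece (k + 1) (k + 1) := by
  simp only [rhoPiece]
  push_cast
  ring

theorem rhoPieceDeriv_succ (k : ℤ) : rhoPieceDeriv k (k + 1) = rhoPieceDeriv (k + 1) (k + 1) := by
  simp only [rhoPieceDeriv, zpow_add_one₀ (neg_ne_zero.2 one_ne_zero : (-1 : ℝ) ≠ 0)]
  push_cast
  ring

theorem hasDerivAt_rhoPiece (k : ℤ) (x : ℝ) : HasDerivAt (rhoPiece k) (rhoPieceDeriv k x) x := by
  have hlin : HasDerivAt (fun y : ℝ => y - k) 1 x := (hasDerivAt_id' x).sub_const _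
  refine (((hlin.mul (hlin.const_sub 1)).const_mul ((-1 : ℝ) ^ k)).div_const 2).congr_deriv ?_
  simp only [rhoPieceDeriv]
  ring

theorem hasDerivAt_rhoPieceDeriv (k : ℤ) (x : ℝ) :
    HasDerivAt (rhoPieceDeriv k) (-(-1 : ℝ) ^ k) x := by
  have hlin : HasDerivAt (fun y : ℝ => y - k) 1 x := (hasDerivAt_id' x).sub_const _
  exact ((hlin.const_sub (1 / 2)).const_mul ((-1 : ℝ) ^ k)).congr_deriv (by ring)

theorem hasDerivAt_rho (x : ℝ) : HasDerivAt rho (rhoDeriv x) x :=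
  Int.hasDerivAt_of_eq_floor (fun _ => rfl) rhoPiece_succ hasDerivAt_rhoPiece rhoPieceDeriv_succ x

theorem deriv_rho : deriv rho = rhoDeriv :=
  funext fun x => (hasDerivAt_rho x).deriv

theorem lipschitzWith_rhoDeriv : LipschitzWith 1 rhoDeriv :=
  lipschitzWith_of_hasDerivWithinAt_Ici
    (Int.continuous_of_eq_floor (fun _ => rfl) rhoPieceDeriv_succ
      fun k => continuous_iff_continuousAt.2 fun x => (hasDerivAt_rhoPieceDeriv k x).continuousAt)
    (fun x => Int.hasDerivWithinAt_Ici_of_eq_floor (fun _ => rfl) rhoPieceDeriv_succ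
      (hasDerivAt_rhoPieceDeriv _ x))
    (by simp)

/-- `ρ` is continuously differentiable on `ℝ`, with derivative
`ρ'(x) = (-1)^⌊x⌋ (1/2 - (x - ⌊x⌋))` at every non-integer `x` and `ρ'(k) = (-1)^k/2`
at every integer `k`; moreover `ρ'` is Lipschitz with constant `1`. -/
theorem rho_contDiff_deriv_lipschitz :
    ContDiff ℝ 1 rho ∧
    (∀ x : ℝ, (∀ k : ℤ, x ≠ (k : ℝ)) →
      HasDerivAt rho ((-1 : ℝ) ^ ⌊x⌋ * (1 / 2 - (x - ⌊x⌋))) x) ∧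
    (∀ k : ℤ, HasDerivAt rho ((-1 : ℝ) ^ k / 2) (k : ℝ)) ∧
    LipschitzWith 1 (deriv rho) := by
  refine ⟨contDiff_one_iff_deriv.2 ⟨fun x => (hasDerivAt_rho x).differentiableAt, ?_⟩,
    fun x _ => hasDerivAt_rho x, fun k => ?_, deriv_rho ▸ lipschitzWith_rhoDeriv⟩
  · exact deriv_rho ▸ lipschitzWith_rhoDeriv.continuous
  · convert hasDerivAt_rho k using 1
    simp [rhoDeriv, rhoPieceDeriv, div_eq_mul_inv]
end
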